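/- arXiv:1607.00711 — 5 statements merged into one kernel-verified Lean document; each statement's English description precedes it below -/
import Mathlib

section
/- Fix integers N ≥ 1 and T ≥ 1, positive real constants τ, W, N₀, positive channel gains h_t^(i) > 0 for i = 1,…,N and t = 1,…,T, and positive energy budgets E_i > 0. Suppose e* ∈ F and there exist constants γ₀^(i) ∈ ℝ (one per user) such that for every user i and slot t, e*_t^(i) = max(0, γ₀^(i) − γ_t^(i)), where γ_t^(i) = (τ·N₀ + Σ_{n≠i} h_t^(n)·e*_t^(n)) / h_t^(i). Then e* is a global maximizer of the offline sum-throughput: J(e*) ≥ J(e) for every e ∈ F. -/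
open Finset

/-- Sufficiency direction of Theorem 1: an allocation satisfying the
water-filling conditions (6)-(8) is a global maximizer of the offline
sum-throughput over the feasible set. -/
theorem stmt_0
    (N T : ℕ) (hN : 1 ≤ N) (hT : 1 ≤ T)
    (τ W N₀ : ℝ) (hτ : 0 < τ) (hW : 0 < W) (hN₀ : 0 < N₀)
    (h : Fin N → Fin T → ℝ) (hh : ∀ i t, 0 < h i t)
    (E : Fin N → ℝ) (hE : ∀ i, 0 < E i)
    (estar : Fin N → Fin T → ℝ)
    (hpos : ∀ i t, 0 ≤ estar i t) (hsum : ∀ i, ∑ t, estar i t = E i)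
    (γ₀ : Fin N → ℝ)
    (hwf : ∀ i t, estar i t =
      max 0 (γ₀ i - (τ * N₀ + ∑ n ∈ univ.erase i, h n t * estar n t) / h i t)) :
    ∀ e : Fin N → Fin T → ℝ,
      (∀ i t, 0 ≤ e i t) → (∀ i, ∑ t, e i t = E i) →
      ∑ t, τ * W * Real.logb 2 (1 + (1 / (τ * N₀)) * ∑ i, h i t * e i t) ≤
        ∑ t, τ * W * Real.logb 2 (1 + (1 / (τ * N₀)) * ∑ i, h i t * estar i t) := by
  intro e he hesum
  have hτN₀ : 0 < τ * N₀ := mul_pos hτ hN₀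
  have hlog2 : 0 < Real.log 2 := Real.log_pos (by norm_num)
  set g : Fin N → Fin T → ℝ := fun i t =>
    (τ * N₀ + ∑ n ∈ univ.erase i, h n t * estar n t) / h i t with hg
  set Ss : Fin T → ℝ := fun t => τ * N₀ + ∑ i, h i t * estar i t with hSs
  set Se : Fin T → ℝ := fun t => τ * N₀ + ∑ i, h i t * e i t with hSe
  have hwf' : ∀ i t, estar i t = max 0 (γ₀ i - g i t) := by
    intro i t; simp only [hg]; exact hwf i t
  have hgpos : ∀ i t, 0 < g i t := by
    intro i t
    apply div_pos _ (hh i t)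
    have : 0 ≤ ∑ n ∈ univ.erase i, h n t * estar n t :=
      Finset.sum_nonneg fun n _ => mul_nonneg (hh n t).le (hpos n t)
    linarith
  have hSsp : ∀ t, 0 < Ss t := by
    intro t
    have : 0 ≤ ∑ i, h i t * estar i t :=
      Finset.sum_nonneg fun i _ => mul_nonneg (hh i t).le (hpos i t)
    simp only [hSs]; linarith
  have hSep : ∀ t, 0 < Se t := by
    intro t
    have : 0 ≤ ∑ i, h i t * e i t :=
      Finset.sum_nonneg fun i _ => mul_nonneg (hh i t).le (he i t)
    simp only [hSe]; linarith
  have hsplit : ∀ i t, Ss t = h i t * (estar i t + g i t) := by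
    intro i t
    have h1 := Finset.add_sum_erase univ (fun n => h n t * estar n t) (mem_univ i)
    have h2 : h i t * g i t = τ * N₀ + ∑ n ∈ univ.erase i, h n t * estar n t := by
      simp only [hg]
      rw [mul_comm, div_mul_cancel₀ _ (hh i t).ne']
    simp only [hSs]
    rw [mul_add, h2]
    linarith [h1]
  have hγpos : ∀ i, 0 < γ₀ i := by
    intro i
    by_contra hc
    push_neg at hc
    have hz : ∀ t, estar i t = 0 := by
      intro t
      rw [hwf' i t, max_eq_left]
      have := hgpos i t
      linarith
    have h0 := hsum i
    simp only [hz, Finset.sum_const_zero] at h0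
    exact (hE i).ne' h0.symm
  have hub : ∀ i t, h i t * γ₀ i ≤ Ss t := by
    intro i t
    have h1 : γ₀ i - g i t ≤ estar i t := by
      rw [hwf' i t]; exact le_max_right _ _
    rw [hsplit i t]
    nlinarith [(hh i t).le]
  have heq : ∀ i t, h i t * estar i t * γ₀ i = estar i t * Ss t := by
    intro i t
    rcases eq_or_lt_of_le (hpos i t) with h0 | h0
    · rw [← h0]; ring
    · have hv : estar i t = γ₀ i - g i t := by
        have hw := hwf' i t
        rcases le_or_gt (γ₀ i - g i t) 0 with hle | hlt
        · rw [max_eq_left hle] at hw; linarith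
        · rw [max_eq_right hlt.le] at hw; exact hw
      rw [hsplit i t]
      have : estar i t + g i t = γ₀ i := by linarith
      rw [this]; ring
  -- the linearized slack is nonpositive
  have hA : ∑ t, ∑ i, h i t * e i t / Ss t ≤ ∑ i, E i / γ₀ i := by
    rw [Finset.sum_comm]
    apply Finset.sum_le_sum
    intro i _
    have step : ∀ t ∈ univ, h i t * e i t / Ss t ≤ e i t / γ₀ i := by
      intro t _
      rw [div_le_div_iff₀ (hSsp t) (hγpos i)]
      nlinarith [hub i t, he i t]
    calc ∑ t, h i t * e i t / Ss t ≤ ∑ t, e i t / γ₀ i :=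
          Finset.sum_le_sum step
      _ = E i / γ₀ i := by rw [← Finset.sum_div, hesum i]
  have hB : ∑ t, ∑ i, h i t * estar i t / Ss t = ∑ i, E i / γ₀ i := by
    rw [Finset.sum_comm]
    apply Finset.sum_congr rfl
    intro i _
    have step : ∀ t ∈ univ, h i t * estar i t / Ss t = estar i t / γ₀ i := by
      intro t _
      rw [div_eq_div_iff (hSsp t).ne' (hγpos i).ne']
      exact heq i t
    calc ∑ t, h i t * estar i t / Ss t = ∑ t, estar i t / γ₀ i :=
          Finset.sum_congr rfl step
      _ = E i / γ₀ i := by rw [← Finset.sum_div, hsum i]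
  have hmain : ∑ t, (Se t / Ss t - 1) ≤ 0 := by
    have hterm : ∀ t ∈ univ, Se t / Ss t - 1
        = (∑ i, h i t * e i t / Ss t) - ∑ i, h i t * estar i t / Ss t := by
      intro t _
      rw [← Finset.sum_div, ← Finset.sum_div]
      field_simp [(hSsp t).ne']
      simp only [hSe, hSs]
      ring
    rw [Finset.sum_congr rfl hterm, Finset.sum_sub_distrib]
    have := hA
    linarith [hB]
  -- from log concavity per slot
  have hrewA : ∀ t ∈ univ, τ * W * Real.logb 2 (1 + 1 / (τ * N₀) * ∑ i, h i t * e i t)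
      = τ * W * Real.logb 2 (Se t / (τ * N₀)) := by
    intro t _
    congr 1
    congr 1
    simp only [hSe]
    field_simp
  have hrewB : ∀ t ∈ univ, τ * W * Real.logb 2 (1 + 1 / (τ * N₀) * ∑ i, h i t * estar i t)
      = τ * W * Real.logb 2 (Ss t / (τ * N₀)) := by
    intro t _
    congr 1
    congr 1
    simp only [hSs]
    field_simp
  rw [Finset.sum_congr rfl hrewA, Finset.sum_congr rfl hrewB]
  rw [← sub_nonpos, ← Finset.sum_sub_distrib]
  have hstep : ∀ t ∈ univ,
      τ * W * Real.logb 2 (Se t / (τ * N₀)) - τ * W * Real.logb 2 (Ss t / (τ * N₀))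
        ≤ τ * W / Real.log 2 * (Se t / Ss t - 1) := by
    intro t _
    have hae : (0:ℝ) < Se t / (τ * N₀) := div_pos (hSep t) hτN₀
    have has : (0:ℝ) < Ss t / (τ * N₀) := div_pos (hSsp t) hτN₀
    have hratio : (Se t / (τ * N₀)) / (Ss t / (τ * N₀)) = Se t / Ss t := by
      field_simp
    have hlog : Real.log (Se t / (τ * N₀)) - Real.log (Ss t / (τ * N₀))
        ≤ Se t / Ss t - 1 := by
      rw [← Real.log_div hae.ne' has.ne', hratio]
      exact Real.log_le_sub_one_of_pos (div_pos (hSep t) (hSsp t))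
    rw [Real.logb, Real.logb]
    rw [show τ * W * (Real.log (Se t / (τ * N₀)) / Real.log 2)
          - τ * W * (Real.log (Ss t / (τ * N₀)) / Real.log 2)
        = τ * W / Real.log 2 * (Real.log (Se t / (τ * N₀)) - Real.log (Ss t / (τ * N₀)))
      from by ring]
    apply mul_le_mul_of_nonneg_left hlog
    positivity
  calc ∑ t, (τ * W * Real.logb 2 (Se t / (τ * N₀)) - τ * W * Real.logb 2 (Ss t / (τ * N₀)))
      ≤ ∑ t, τ * W / Real.log 2 * (Se t / Ss t - 1) := Finset.sum_le_sum hstep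
    _ = τ * W / Real.log 2 * ∑ t, (Se t / Ss t - 1) := by rw [Finset.mul_sum]
    _ ≤ 0 := mul_nonpos_of_nonneg_of_nonpos (by positivity) hmain
end

section
/- Fix integers N ≥ 1 and T ≥ 1, positive real constants τ, W, N₀, positive channel gains h_t^(i) > 0, and positive energy budgets E_i > 0. If e* ∈ F is a global maximizer of J over F, then for every user i there exists a constant γ₀^(i) ∈ ℝ such that for every slot t, e*_t^(i) = max(0, γ₀^(i) − γ_t^(i)), where γ_t^(i) = (τ·N₀ + Σ_{n≠i} h_t^(n)·e*_t^(n)) / h_t^(i); in particular Σ_{t=1}^T max(0, γ₀^(i) − γ_t^(i)) = E_i. -/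
open Finset

/-- Necessity direction of Theorem 1: any global maximizer of the offline
sum-throughput satisfies the water-filling conditions (6)-(8), obtained
from the KKT conditions. -/
theorem stmt_1
    (N T : ℕ) (hN : 1 ≤ N) (hT : 1 ≤ T)
    (τ W N₀ : ℝ) (hτ : 0 < τ) (hW : 0 < W) (hN₀ : 0 < N₀)
    (h : Fin N → Fin T → ℝ) (hh : ∀ i t, 0 < h i t)
    (E : Fin N → ℝ) (hE : ∀ i, 0 < E i)
    (estar : Fin N → Fin T → ℝ)
    (hpos : ∀ i t, 0 ≤ estar i t) (hsum : ∀ i, ∑ t, estar i t = E i)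
    (hopt : ∀ e : Fin N → Fin T → ℝ,
      (∀ i t, 0 ≤ e i t) → (∀ i, ∑ t, e i t = E i) →
      ∑ t, τ * W * Real.logb 2 (1 + (1 / (τ * N₀)) * ∑ i, h i t * e i t) ≤
        ∑ t, τ * W * Real.logb 2 (1 + (1 / (τ * N₀)) * ∑ i, h i t * estar i t)) :
    ∀ i : Fin N, ∃ γ₀ : ℝ,
      (∀ t : Fin T, estar i t =
        max 0 (γ₀ - (τ * N₀ + ∑ n ∈ univ.erase i, h n t * estar n t) / h i t)) ∧
      ∑ t, max 0 (γ₀ - (τ * N₀ + ∑ n ∈ univ.erase i, h n t * estar n t) / h i t) = E i := by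
  intro i
  set γ : Fin T → ℝ :=
    fun t => (τ * N₀ + ∑ n ∈ univ.erase i, h n t * estar n t) / h i t with hγdef
  have hγapp : ∀ t : Fin T,
      γ t = (τ * N₀ + ∑ n ∈ univ.erase i, h n t * estar n t) / h i t := fun t => rfl
  have hτN : 0 < τ * N₀ := mul_pos hτ hN₀
  have herasenn : ∀ t : Fin T, 0 ≤ ∑ n ∈ univ.erase i, h n t * estar n t := by
    intro t
    exact Finset.sum_nonneg fun n _ => mul_nonneg (hh n t).le (hpos n t)
  have hγpos : ∀ t, 0 < γ t := by
    intro t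
    rw [hγapp t]
    exact div_pos (by have := herasenn t; linarith) (hh i t)
  -- factorization of the per-slot SNR term
  have hfact : ∀ (t : Fin T) (x : ℝ),
      1 + 1 / (τ * N₀) * (∑ n ∈ univ.erase i, h n t * estar n t + h i t * x)
        = (h i t / (τ * N₀)) * (γ t + x) := by
    intro t x
    rw [hγapp t]
    have hh' := (hh i t).ne'
    field_simp
    ring
  -- the key exchange inequality
  have key : ∀ s t : Fin T, 0 < estar i s → γ s + estar i s ≤ γ t + estar i t := by
    intro s t hs
    rcases eq_or_ne s t with rfl | hst
    · exact le_refl _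
    by_contra hlt
    push_neg at hlt
    set ε := min (estar i s) ((γ s + estar i s - (γ t + estar i t)) / 2) with hεdef
    have hε0 : 0 < ε := lt_min hs (by linarith)
    have hεs : ε ≤ estar i s := min_le_left _ _
    have hεlt : ε < γ s + estar i s - (γ t + estar i t) :=
      lt_of_le_of_lt (min_le_right _ _) (by linarith)
    set e : Fin N → Fin T → ℝ := fun n u =>
      estar n u + (if n = i ∧ u = s then -ε else 0) + (if n = i ∧ u = t then ε else 0)
      with hedef
    have he_other : ∀ (n : Fin N) (u : Fin T), n ≠ i → e n u = estar n u := by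
      intro n u hn
      simp [hedef, hn]
    have he_is : e i s = estar i s - ε := by
      simp [hedef, hst, sub_eq_add_neg]
    have he_it : e i t = estar i t + ε := by
      simp [hedef, Ne.symm hst]
    have he_else : ∀ u : Fin T, u ≠ s → u ≠ t → ∀ n, e n u = estar n u := by
      intro u hus hut n
      have h1 : ¬(n = i ∧ u = s) := fun hc => hus hc.2
      have h2 : ¬(n = i ∧ u = t) := fun hc => hut hc.2
      simp only [hedef, if_neg h1, if_neg h2]
      ring
    have hnn : ∀ n u, 0 ≤ e n u := by
      intro n u
      rcases eq_or_ne n i with rfl | hn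
      · rcases eq_or_ne u s with rfl | hus
        · rw [he_is]; linarith
        · rcases eq_or_ne u t with rfl | hut
          · rw [he_it]; have := hpos n u; linarith
          · rw [he_else u hus hut]; exact hpos n u
      · rw [he_other n u hn]; exact hpos n u
    have hsume : ∀ n, ∑ u, e n u = E n := by
      intro n
      rcases eq_or_ne n i with rfl | hn
      · simp only [hedef, true_and]
        rw [Finset.sum_add_distrib, Finset.sum_add_distrib,
          Finset.sum_ite_eq' univ s fun _ => -ε, Finset.sum_ite_eq' univ t fun _ => ε]
        simp [hsum n]
      · rw [Finset.sum_congr rfl fun u _ => he_other n u hn]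
        exact hsum n
    have hineq := hopt e hnn hsume
    -- reduce to slots s and t
    have hsplit : ∀ F : Fin T → ℝ,
        ∑ u, F u = (∑ u ∈ univ \ {s, t}, F u) + (F s + F t) := by
      intro F
      rw [← Finset.sum_pair hst, Finset.sum_sdiff (Finset.subset_univ _)]
    rw [hsplit (fun u => τ * W * Real.logb 2 (1 + 1 / (τ * N₀) * ∑ n, h n u * e n u)),
        hsplit (fun u => τ * W * Real.logb 2 (1 + 1 / (τ * N₀) * ∑ n, h n u * estar n u))]
      at hineq
    have hrest : (∑ u ∈ univ \ {s, t},
        τ * W * Real.logb 2 (1 + 1 / (τ * N₀) * ∑ n, h n u * e n u))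
        = ∑ u ∈ univ \ {s, t},
          τ * W * Real.logb 2 (1 + 1 / (τ * N₀) * ∑ n, h n u * estar n u) := by
      refine Finset.sum_congr rfl fun u hu => ?_
      simp only [Finset.mem_sdiff, Finset.mem_insert, Finset.mem_singleton] at hu
      have hus : u ≠ s := fun hc => hu.2 (Or.inl hc)
      have hut : u ≠ t := fun hc => hu.2 (Or.inr hc)
      rw [Finset.sum_congr rfl fun n _ => by rw [he_else u hus hut n]]
    rw [hrest] at hineq
    have h2 : τ * W * Real.logb 2 (1 + 1 / (τ * N₀) * ∑ n, h n s * e n s)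
        + τ * W * Real.logb 2 (1 + 1 / (τ * N₀) * ∑ n, h n t * e n t)
        ≤ τ * W * Real.logb 2 (1 + 1 / (τ * N₀) * ∑ n, h n s * estar n s)
        + τ * W * Real.logb 2 (1 + 1 / (τ * N₀) * ∑ n, h n t * estar n t) := by
      linarith
    -- compute the modified sums
    have hesum : (∑ n, h n s * e n s) = ∑ n ∈ univ.erase i, h n s * estar n s
        + h i s * (estar i s - ε) := by
      rw [← Finset.sum_erase_add univ _ (Finset.mem_univ i), he_is]
      congr 1
      refine Finset.sum_congr rfl fun n hn => ?_
      rw [he_other n s (Finset.ne_of_mem_erase hn)]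
    have hetsum : (∑ n, h n t * e n t) = ∑ n ∈ univ.erase i, h n t * estar n t
        + h i t * (estar i t + ε) := by
      rw [← Finset.sum_erase_add univ _ (Finset.mem_univ i), he_it]
      congr 1
      refine Finset.sum_congr rfl fun n hn => ?_
      rw [he_other n t (Finset.ne_of_mem_erase hn)]
    have hstarsum : ∀ u : Fin T, (∑ n, h n u * estar n u)
        = ∑ n ∈ univ.erase i, h n u * estar n u + h i u * estar i u := by
      intro u
      rw [← Finset.sum_erase_add univ _ (Finset.mem_univ i)]
    rw [hesum, hetsum, hstarsum s, hstarsum t, hfact s (estar i s - ε),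
        hfact t (estar i t + ε), hfact s (estar i s), hfact t (estar i t)] at h2
    -- positivity
    have hks : 0 < h i s / (τ * N₀) := div_pos (hh i s) hτN
    have hkt : 0 < h i t / (τ * N₀) := div_pos (hh i t) hτN
    have hp1 : 0 < γ s + (estar i s - ε) := by have := hγpos s; linarith
    have hp2 : 0 < γ t + (estar i t + ε) := by have := hγpos t; have := hpos i t; linarith
    have hq1 : 0 < γ s + estar i s := by have := hγpos s; linarith
    have hq2 : 0 < γ t + estar i t := by have := hγpos t; have := hpos i t; linarith
    -- products comparison: the perturbed product is strictly larger
    have hprod : (h i s / (τ * N₀) * (γ s + estar i s)) * (h i t / (τ * N₀) * (γ t + estar i t))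
        < (h i s / (τ * N₀) * (γ s + (estar i s - ε)))
          * (h i t / (τ * N₀) * (γ t + (estar i t + ε))) := by
      have hfac : 0 < ε * (γ s + estar i s - (γ t + estar i t) - ε) :=
        mul_pos hε0 (by linarith)
      have hk : 0 < (h i s / (τ * N₀)) * (h i t / (τ * N₀)) := mul_pos hks hkt
      nlinarith [mul_pos hk hfac]
    have hτW : 0 < τ * W := mul_pos hτ hW
    have hq1' : 0 < h i s / (τ * N₀) * (γ s + estar i s) := mul_pos hks hq1
    have hq2' : 0 < h i t / (τ * N₀) * (γ t + estar i t) := mul_pos hkt hq2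
    have hp1' : 0 < h i s / (τ * N₀) * (γ s + (estar i s - ε)) := mul_pos hks hp1
    have hp2' : 0 < h i t / (τ * N₀) * (γ t + (estar i t + ε)) := mul_pos hkt hp2
    have hlt2 : Real.logb 2 ((h i s / (τ * N₀) * (γ s + estar i s))
          * (h i t / (τ * N₀) * (γ t + estar i t)))
        < Real.logb 2 ((h i s / (τ * N₀) * (γ s + (estar i s - ε)))
          * (h i t / (τ * N₀) * (γ t + (estar i t + ε)))) :=
      Real.logb_lt_logb one_lt_two (mul_pos hq1' hq2') hprod
    rw [Real.logb_mul hq1'.ne' hq2'.ne', Real.logb_mul hp1'.ne' hp2'.ne'] at hlt2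
    linarith [mul_lt_mul_of_pos_left hlt2 hτW]
  -- an active slot exists
  have hex : ∃ s₀ : Fin T, 0 < estar i s₀ := by
    by_contra hc
    push_neg at hc
    have hz : ∀ t : Fin T, estar i t = 0 := fun t => le_antisymm (hc t) (hpos i t)
    have := hsum i
    simp [hz] at this
    exact absurd this.symm (hE i).ne'
  obtain ⟨s₀, hs₀⟩ := hex
  have hmain : ∀ t : Fin T, estar i t = max 0 (γ s₀ + estar i s₀ - γ t) := by
    intro t
    rcases eq_or_lt_of_le (hpos i t) with hz | hp
    · have hle := key s₀ t hs₀
      rw [← hz] at hle ⊢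
      rw [max_eq_left (by linarith)]
    · have h1 := key s₀ t hs₀
      have h2 := key t s₀ hp
      have h3 : estar i t = γ s₀ + estar i s₀ - γ t := by linarith
      rw [h3, max_eq_right (by linarith)]
  refine ⟨γ s₀ + estar i s₀, fun t => by rw [← hγapp t]; exact hmain t, ?_⟩
  have h4 : (∑ t, max 0 (γ s₀ + estar i s₀
      - (τ * N₀ + ∑ n ∈ univ.erase i, h n t * estar n t) / h i t)) = ∑ t, estar i t :=
    Finset.sum_congr rfl fun t _ => by rw [← hγapp t]; exact (hmain t).symm
  rw [h4]
  exact hsum i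
end

section
/- Let H be a nonnegative integrable real random variable and T ≥ 1 an integer. Define ν_{T+1} = 0 and ν_t = 𝔼[max(H, ν_{t+1})] for t = T, …, 1. Define value functions W_T(E, h) = h·E for E ≥ 0, h ≥ 0, and, backward for t = T−1, …, 1, W_t(E, h) = max over e ∈ [0, E] of (h·e + 𝔼[W_{t+1}(E − e, H)]). Then for every t = 1,…,T, every E ≥ 0 and every h ≥ 0: W_t(E, h) = max(h, ν_{t+1})·E, and hence 𝔼[W_t(E, H)] = ν_t·E. -/
open MeasureTheory

/-- Closed-form solution of the linearized finite-horizon dynamic program for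
a single user: the value functions `W t E h = max (h, ν (t+1)) · E` and the
expected reward-to-go is linear, `𝔼[W t E H] = ν t · E`. -/
theorem stmt_9
    {Ω : Type*} [MeasurableSpace Ω] (μ : Measure Ω) [IsProbabilityMeasure μ]
    (H : Ω → ℝ) (hH : ∀ ω, 0 ≤ H ω) (hint : Integrable H μ)
    (T : ℕ) (hT : 1 ≤ T)
    (ν : ℕ → ℝ) (hν0 : ν (T + 1) = 0)
    (hνrec : ∀ t, 1 ≤ t → t ≤ T → ν t = ∫ ω, max (H ω) (ν (t + 1)) ∂μ)
    (Wv : ℕ → ℝ → ℝ → ℝ)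
    (hWT : ∀ E h : ℝ, 0 ≤ E → 0 ≤ h → Wv T E h = h * E)
    (hWt : ∀ t, 1 ≤ t → t < T → ∀ E h : ℝ, 0 ≤ E → 0 ≤ h →
      Wv t E h =
        sSup ((fun e => h * e + ∫ ω, Wv (t + 1) (E - e) (H ω) ∂μ) '' Set.Icc 0 E)) :
    ∀ t, 1 ≤ t → t ≤ T → ∀ E h : ℝ, 0 ≤ E → 0 ≤ h →
      Wv t E h = max h (ν (t + 1)) * E ∧ (∫ ω, Wv t E (H ω) ∂μ) = ν t * E := by
  suffices key : ∀ k t, 1 ≤ t → t ≤ T → T - t = k →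
      ∀ E h : ℝ, 0 ≤ E → 0 ≤ h →
        Wv t E h = max h (ν (t + 1)) * E ∧ (∫ ω, Wv t E (H ω) ∂μ) = ν t * E by
    intro t ht1 ht2
    exact key (T - t) t ht1 ht2 rfl
  intro k
  induction k with
  | zero =>
    intro t ht1 ht2 htk E h hE hh
    have htT : t = T := by omega
    subst htT
    have hW1 : ∀ h' : ℝ, 0 ≤ h' → Wv t E h' = max h' (ν (t + 1)) * E := by
      intro h' hh'
      rw [hWT E h' hE hh', hν0, max_eq_left hh']
    refine ⟨hW1 h hh, ?_⟩
    have hfun : (fun ω => Wv t E (H ω)) = fun ω => max (H ω) (ν (t + 1)) * E :=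
      funext fun ω => hW1 (H ω) (hH ω)
    rw [hfun, integral_mul_const, hνrec t ht1 le_rfl]
  | succ k ih =>
    intro t ht1 ht2 htk E h hE hh
    have htlt : t < T := by omega
    have ih' := ih (t + 1) (by omega) (by omega) (by omega)
    have hW1 : ∀ h' : ℝ, 0 ≤ h' → Wv t E h' = max h' (ν (t + 1)) * E := by
      intro h' hh'
      rw [hWt t ht1 htlt E h' hE hh']
      have himg : (fun e => h' * e + ∫ ω, Wv (t + 1) (E - e) (H ω) ∂μ) '' Set.Icc 0 E
          = (fun e => h' * e + ν (t + 1) * (E - e)) '' Set.Icc 0 E := by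
        apply Set.image_congr
        intro e he
        rw [(ih' (E - e) 0 (by linarith [he.1, he.2]) le_rfl).2]
      rw [himg]
      apply IsGreatest.csSup_eq
      constructor
      · rcases le_total (ν (t + 1)) h' with h1 | h1
        · exact ⟨E, ⟨hE, le_rfl⟩, by rw [max_eq_left h1]; ring⟩
        · exact ⟨0, ⟨le_rfl, hE⟩, by rw [max_eq_right h1]; ring⟩
      · rintro x ⟨e, he, rfl⟩
        have h1 : 0 ≤ (max h' (ν (t + 1)) - h') * e :=
          mul_nonneg (sub_nonneg.mpr (le_max_left _ _)) he.1
        have h2 : 0 ≤ (max h' (ν (t + 1)) - ν (t + 1)) * (E - e) :=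
          mul_nonneg (sub_nonneg.mpr (le_max_right _ _)) (by linarith [he.2])
        simp only
        nlinarith [h1, h2]
    refine ⟨hW1 h hh, ?_⟩
    have hfun : (fun ω => Wv t E (H ω)) = fun ω => max (H ω) (ν (t + 1)) * E :=
      funext fun ω => hW1 (H ω) (hH ω)
    rw [hfun, integral_mul_const, hνrec t ht1 (le_of_lt htlt)]
end

section
/- Fix integers N ≥ 1 and T ≥ 1, positive constants τ, N₀ > 0, positive channel gains h_t^(i) > 0, and positive energy budgets E_i > 0. Measure throughput in nats: J(e) = Σ_{t=1}^T log(1 + (1/(τ·N₀))·Σ_{i=1}^N h_t^(i)·e_t^(i)). Suppose the allocations e^(1), …, e^(N) ∈ ℝ^T are constructed sequentially: for each i = 1,…,N, e^(i) maximizes the function x ↦ Σ_{t=1}^T log(1 + (h_t^(i)·x_t + Σ_{n<i} h_t^(n)·e_t^(n))/(τ·N₀)) over {x ∈ ℝ^T : x_t ≥ 0, Σ_{t=1}^T x_t = E_i}. Then the resulting allocation e = (e^(1),…,e^(N)) satisfies sup_{e' ∈ F} J(e') − J(e) ≤ (N−1)·T/2, where F = {e' ∈ ℝ^{N×T} : e'_t^(i)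 ≥ 0, Σ_{t=1}^T e'_t^(i) = E_i for every i}. -/
open Finset Real

/-!
Switch the users from an arbitrary feasible allocation `e'` to the IWF allocation `e` one at a
time, in the order of the IWF pass, and telescope. Switching user `i` only changes its own
signal, and the noise it then sees is its IWF noise plus the nonnegative power of the later users,
still on `e'`. Dividing by the gain, `e i` water-fills the normalized noise levels `a t`, so every
slot it uses sits at the minimal water level `w` and `e i t ≤ w` in every slot. Hence, by
`log y ≤ y / 2`, slot `t` gains at most `1/2 + (e' i t - e i t) / (2 w)` from the switch, and the
second terms cancel because both allocations spend the budget `E i`: each switch gains at most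
`T / 2`. The last user sees no extra noise, so its switch gains nothing by optimality.
-/

section WaterFilling

variable {ι : Type*} [Fintype ι]

def budgetSet (E : ℝ) : Set (ι → ℝ) := {x | (∀ t, 0 ≤ x t) ∧ ∑ t, x t = E}

lemma convex_budgetSet (E : ℝ) : Convex ℝ (budgetSet (ι := ι) E) := by
  rintro x ⟨hx0, hxE⟩ y ⟨hy0, hyE⟩ a b ha hb hab
  refine ⟨fun t => ?_, ?_⟩
  · simp only [Pi.add_apply, Pi.smul_apply, smul_eq_mul]
    have := hx0 t; have := hy0 t
    positivity
  · simp only [Pi.add_apply, Pi.smul_apply, smul_eq_mul, sum_add_distrib, ← mul_sum, hxE, hyE,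
      ← add_mul, hab, one_mul]

lemma hasFDerivAt_sum_log_add {a x : ι → ℝ} (h : ∀ t, 0 < a t + x t) :
    HasFDerivAt (fun y : ι → ℝ => ∑ t, log (a t + y t))
      (∑ t, (a t + x t)⁻¹ • ContinuousLinearMap.proj (R := ℝ) (φ := fun _ : ι => ℝ) t) x :=
  HasFDerivAt.fun_sum fun t _ => ((hasFDerivAt_apply t x).const_add (a t)).log (h t).ne'

lemma sum_sub_div_nonpos_of_isMaxOn {a e x : ι → ℝ} {E : ℝ} (h : ∀ t, 0 < a t + e t)
    (hmax : IsMaxOn (fun y : ι → ℝ => ∑ t, log (a t + y t)) (budgetSet E) e)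
    (he : e ∈ budgetSet E) (hx : x ∈ budgetSet E) :
    ∑ t, (x t - e t) / (a t + e t) ≤ 0 := by
  have := hmax.localize.hasFDerivWithinAt_nonpos (hasFDerivAt_sum_log_add h).hasFDerivWithinAt
    (sub_mem_posTangentConeAt_of_segment_subset ((convex_budgetSet E).segment_subset he hx))
  simpa [div_eq_inv_mul] using this

lemma le_add_of_isMaxOn {a e : ι → ℝ} {E : ℝ} (ha : ∀ t, 0 < a t) (he : e ∈ budgetSet E)
    (hmax : IsMaxOn (fun y : ι → ℝ => ∑ t, log (a t + y t)) (budgetSet E) e) (s u : ι) :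
    e s ≤ a u + e u := by
  classical
  have hL : ∀ t, 0 < a t + e t := fun t => add_pos_of_pos_of_nonneg (ha t) (he.1 t)
  rcases (he.1 s).eq_or_lt with hs | hs
  · rw [← hs]; exact (hL u).le
  set x : ι → ℝ := e + e s • (Pi.single u 1 - Pi.single s 1) with hx_def
  have hx : x ∈ budgetSet E := by
    refine ⟨fun t => ?_, ?_⟩
    · simp only [hx_def, Pi.add_apply, Pi.smul_apply, Pi.sub_apply, Pi.single_apply, smul_eq_mul]
      have := he.1 t
      split_ifs with htu hts <;> subst_vars <;> linarith
    · simp [hx_def, sum_add_distrib, ← mul_sum, he.2]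
  have hsum : ∑ t, (x t - e t) / (a t + e t) = e s / (a u + e u) - e s / (a s + e s) := by
    simp [hx_def, Pi.single_apply, mul_sub, sub_div, sum_sub_distrib, ite_div]
  have hfoc := sum_sub_div_nonpos_of_isMaxOn hL hmax he hx
  rw [hsum, sub_nonpos, div_le_div_iff_of_pos_left hs (hL _) (hL _)] at hfoc
  linarith [ha s]

lemma exists_waterLevel {a e : ι → ℝ} {E : ℝ} (ha : ∀ t, 0 < a t) (he : e ∈ budgetSet E)
    (hmax : IsMaxOn (fun y : ι → ℝ => ∑ t, log (a t + y t)) (budgetSet E) e) :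
    ∃ w > 0, ∀ t, e t ≤ w ∧ w ≤ a t + e t := by
  rcases isEmpty_or_nonempty ι with hι | hι
  · exact ⟨1, one_pos, isEmptyElim⟩
  obtain ⟨s, hs⟩ := Finite.exists_min fun t => a t + e t
  exact ⟨a s + e s, by linarith [ha s, he.1 s], fun t => ⟨le_add_of_isMaxOn ha he hmax t s, hs t⟩⟩

lemma log_le_div_two {y : ℝ} (hy : 0 < y) : log y ≤ y / 2 := by
  have := log_le_sub_one_of_pos (half_pos hy)
  rw [log_div hy.ne' two_ne_zero] at this
  linarith [log_two_lt_d9]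

lemma log_add_sub_log_add_le {b x y w : ℝ} (hb : 0 < b) (hy : 0 ≤ y) (hw : 0 < w)
    (hxw : x ≤ w) (hwb : w ≤ b + x) :
    log (b + y) - log (b + x) ≤ 1 / 2 + (y - x) / (2 * w) := by
  have hbx : 0 < b + x := by linarith
  rcases le_or_gt y x with hyx | hxy
  · have hlog : log (b + y) ≤ log (b + x) := log_le_log (by linarith) (by linarith)
    have : -(1 / 2) ≤ (y - x) / (2 * w) := by rw [le_div_iff₀ (by positivity)]; linarith
    linarith
  · rw [← log_div (by linarith) hbx.ne']
    calc log ((b + y) / (b + x)) ≤ (b + y) / (b + x) / 2 := log_le_div_two (by positivity)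
      _ = 1 / 2 + (y - x) / (2 * (b + x)) := by field_simp; ring
      _ ≤ 1 / 2 + (y - x) / (2 * w) := by gcongr

theorem sum_log_add_sub_le_card_div_two {a b e e' : ι → ℝ} {E : ℝ} (ha : ∀ t, 0 < a t)
    (hab : ∀ t, a t ≤ b t) (he : e ∈ budgetSet E)
    (hmax : IsMaxOn (fun y : ι → ℝ => ∑ t, log (a t + y t)) (budgetSet E) e)
    (he' : e' ∈ budgetSet E) :
    ∑ t, (log (b t + e' t) - log (b t + e t)) ≤ Fintype.card ι / 2 := by
  obtain ⟨w, hw, hlevel⟩ := exists_waterLevel ha he hmax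
  calc ∑ t, (log (b t + e' t) - log (b t + e t)) ≤ ∑ t, (1 / 2 + (e' t - e t) / (2 * w)) :=
        sum_le_sum fun t _ => log_add_sub_log_add_le (by linarith [ha t, hab t]) (he'.1 t) hw
          (hlevel t).1 (by linarith [(hlevel t).2, hab t])
    _ = Fintype.card ι / 2 := by
        rw [sum_add_distrib, ← sum_div univ (fun t => e' t - e t), sum_sub_distrib, he.2, he'.2]
        simp [div_eq_mul_inv]

end WaterFilling

lemma log_one_add_div_eq {c g P x : ℝ} (hc : 0 < c) (hg : 0 < g) (hpos : 0 < (c + P) / g + x) :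
    log (1 + (g * x + P) / c) = log (g / c) + log ((c + P) / g + x) := by
  rw [← log_mul (by positivity) hpos.ne']
  congr 1
  field_simp
  ring

lemma IsMaxOn.sum_log_normalize {κ : Type*} [Fintype κ] {c E : ℝ} {g P e : κ → ℝ}
    (hmax : IsMaxOn (fun x : κ → ℝ => ∑ t, log (1 + (g t * x t + P t) / c)) (budgetSet E) e)
    (hc : 0 < c) (hg : ∀ t, 0 < g t) (hP : ∀ t, 0 ≤ P t) (he : e ∈ budgetSet E) :
    IsMaxOn (fun x : κ → ℝ => ∑ t, log ((c + P t) / g t + x t)) (budgetSet E) e := by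
  have hsplit : ∀ y ∈ budgetSet E, ∑ t, log (1 + (g t * y t + P t) / c) =
      ∑ t, log (g t / c) + ∑ t, log ((c + P t) / g t + y t) := fun y hy => by
    rw [← sum_add_distrib]
    refine sum_congr rfl fun t _ => log_one_add_div_eq hc (hg t) ?_
    have := hy.1 t; have := hP t; have := hg t
    positivity
  refine isMaxOn_iff.2 fun x hx => ?_
  have := isMaxOn_iff.1 hmax x hx
  rwa [hsplit x hx, hsplit e he, add_le_add_iff_left] at this

lemma sum_eq_sum_lt_add_add_sum_gt {α M : Type*} [Fintype α] [LinearOrder α] [AddCommMonoid M]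
    (f : α → M) (i : α) :
    ∑ n, f n = ∑ n ∈ univ.filter (· < i), f n + f i + ∑ n ∈ univ.filter (i < ·), f n := by
  rw [← sum_filter_add_sum_filter_not univ (· < i), add_assoc]
  congr 1
  rw [← add_sum_erase _ _ (by simp : i ∈ univ.filter (¬ · < i))]
  congr 1
  refine sum_congr ?_ fun _ _ => rfl
  ext n
  simp only [mem_erase, mem_filter, mem_univ, true_and, not_lt]
  exact ⟨fun ⟨hne, hle⟩ => lt_of_le_of_ne hle (Ne.symm hne), fun hlt => ⟨hlt.ne', hlt.le⟩⟩

noncomputable def sumRate {ι κ : Type*} [Fintype ι] [Fintype κ] (c : ℝ) (h a : ι → κ → ℝ) : ℝ :=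
  ∑ t, log (1 + 1 / c * ∑ i, h i t * a i t)

section Hybrid

variable {N : ℕ} {β : Type*}

def hybrid (e e' : Fin N → β) (k : ℕ) : Fin N → β := fun n => if (n : ℕ) < k then e n else e' n

lemma hybrid_zero (e e' : Fin N → β) : hybrid e e' 0 = e' := rfl

lemma hybrid_self (e e' : Fin N → β) : hybrid e e' N = e := funext fun n => if_pos n.isLt

lemma sub_eq_sum_hybrid {G : Type*} [AddCommGroup G] (f : (Fin N → β) → G) (e e' : Fin N → β) :
    f e' - f e = ∑ i : Fin N, (f (hybrid e e' i) - f (hybrid e e' (i + 1))) := by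
  rw [Fin.sum_univ_eq_sum_range (fun k => f (hybrid e e' k) - f (hybrid e e' (k + 1))),
    sum_range_sub', hybrid_zero, hybrid_self]

end Hybrid

section Sequential

variable {N : ℕ} {κ : Type*}

/-- The power received from all users other than `i` in both `hybrid e e' i` and
`hybrid e e' (i + 1)`. -/
def othersPower (h e e' : Fin N → κ → ℝ) (i : Fin N) (t : κ) : ℝ :=
  ∑ n ∈ univ.filter (· < i), h n t * e n t + ∑ n ∈ univ.filter (i < ·), h n t * e' n t

lemma sum_mul_hybrid_eq (h e e' : Fin N → κ → ℝ) {i : Fin N} {k : ℕ}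
    (hlt : ∀ n, n < i → (n : ℕ) < k) (hgt : ∀ n, i < n → ¬ (n : ℕ) < k) (t : κ) :
    ∑ n, h n t * hybrid e e' k n t = othersPower h e e' i t + h i t * hybrid e e' k i t := by
  rw [sum_eq_sum_lt_add_add_sum_gt _ i, othersPower, add_right_comm]
  congr 2 <;> refine sum_congr rfl fun n hn => ?_ <;> rw [mem_filter] at hn
  · rw [hybrid, if_pos (hlt n hn.2)]
  · rw [hybrid, if_neg (hgt n hn.2)]

lemma sumRate_hybrid_sub [Fintype κ] {c : ℝ} (hc : 0 < c) {h e e' : Fin N → κ → ℝ}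
    (hh : ∀ i t, 0 < h i t) (he : ∀ i t, 0 ≤ e i t) (he' : ∀ i t, 0 ≤ e' i t) (i : Fin N) :
    sumRate c h (hybrid e e' i) - sumRate c h (hybrid e e' (i + 1)) =
      ∑ t, (log ((c + othersPower h e e' i t) / h i t + e' i t) -
        log ((c + othersPower h e e' i t) / h i t + e i t)) := by
  have hP : ∀ t, 0 ≤ othersPower h e e' i t := fun t => add_nonneg
    (sum_nonneg fun n _ => mul_nonneg (hh n t).le (he n t))
    (sum_nonneg fun n _ => mul_nonneg (hh n t).le (he' n t))
  have hrate : ∀ k, (∀ n, n < i → (n : ℕ) < k) → (∀ n, i < n → ¬ (n : ℕ) < k) → ∀ t,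
      log (1 + 1 / c * ∑ n, h n t * hybrid e e' k n t) =
        log (h i t / c) + log ((c + othersPower h e e' i t) / h i t + hybrid e e' k i t) := by
    intro k hlt hgt t
    have hx : 0 ≤ hybrid e e' k i t := by unfold hybrid; split_ifs <;> simp [he, he']
    rw [sum_mul_hybrid_eq h e e' hlt hgt, one_div_mul_eq_div, add_comm (othersPower _ _ _ _ _)]
    exact log_one_add_div_eq hc (hh i t) (by have := hP t; have := hh i t; positivity)
  unfold sumRate
  rw [← sum_sub_distrib]
  refine sum_congr rfl fun t _ => ?_
  rw [hrate i (fun n hn => hn) (fun n hn => not_lt.2 hn.le),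
    hrate (i + 1) (fun n hn => Nat.lt_succ_of_lt hn) (fun n hn => not_lt.2 hn), hybrid, hybrid,
    if_neg (lt_irrefl _), if_pos (Nat.lt_succ_self _)]
  ring

lemma othersPower_last {M : ℕ} (h e e' : Fin (M + 1) → κ → ℝ) (t : κ) :
    othersPower h e e' (Fin.last M) t = ∑ n ∈ univ.filter (· < Fin.last M), h n t * e n t := by
  rw [othersPower, filter_false_of_mem fun n _ => not_lt.2 (Fin.le_last n), sum_empty, add_zero]

variable [Fintype κ]

def IsSequentialBestResponse (c : ℝ) (h : Fin N → κ → ℝ) (E : Fin N → ℝ) (e : Fin N → κ → ℝ) :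
    Prop :=
  ∀ i, e i ∈ budgetSet (E i) ∧
    IsMaxOn (fun x : κ → ℝ => ∑ t,
      log (1 + (h i t * x t + ∑ n ∈ univ.filter (· < i), h n t * e n t) / c))
      (budgetSet (E i)) (e i)

namespace IsSequentialBestResponse

variable {c : ℝ} {h e e' : Fin N → κ → ℝ} {E : Fin N → ℝ}

lemma isMaxOn_normalized (hc : 0 < c) (hh : ∀ i t, 0 < h i t)
    (he : IsSequentialBestResponse c h E e) (i : Fin N) :
    IsMaxOn (fun x : κ → ℝ => ∑ t,
      log ((c + ∑ n ∈ univ.filter (· < i), h n t * e n t) / h i t + x t))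
      (budgetSet (E i)) (e i) :=
  (he i).2.sum_log_normalize hc (hh i)
    (fun t => sum_nonneg fun n _ => mul_nonneg (hh n t).le ((he n).1.1 t)) (he i).1

lemma sumRate_hybrid_sub_le (hc : 0 < c) (hh : ∀ i t, 0 < h i t)
    (he : IsSequentialBestResponse c h E e) (he' : ∀ i, e' i ∈ budgetSet (E i)) (i : Fin N) :
    sumRate c h (hybrid e e' i) - sumRate c h (hybrid e e' (i + 1)) ≤ Fintype.card κ / 2 := by
  rw [sumRate_hybrid_sub hc hh (fun n => (he n).1.1) (fun n => (he' n).1) i]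
  refine sum_log_add_sub_le_card_div_two (fun t => ?_) (fun t => ?_) (he i).1
    (he.isMaxOn_normalized hc hh i) (he' i)
  · have := hh i t
    have : 0 ≤ ∑ n ∈ univ.filter (· < i), h n t * e n t :=
      sum_nonneg fun n _ => mul_nonneg (hh n t).le ((he n).1.1 t)
    positivity
  · refine div_le_div_of_nonneg_right (add_le_add_right (le_add_of_nonneg_right ?_) _) (hh i t).le
    exact sum_nonneg fun n _ => mul_nonneg (hh n t).le ((he' n).1 t)

lemma sumRate_hybrid_last_sub_nonpos {M : ℕ} {h e e' : Fin (M + 1) → κ → ℝ}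
    {E : Fin (M + 1) → ℝ} (hc : 0 < c) (hh : ∀ i t, 0 < h i t)
    (he : IsSequentialBestResponse c h E e) (he' : ∀ i, e' i ∈ budgetSet (E i)) :
    sumRate c h (hybrid e e' (Fin.last M)) - sumRate c h (hybrid e e' (Fin.last M + 1)) ≤ 0 := by
  simp only [sumRate_hybrid_sub hc hh (fun n => (he n).1.1) (fun n => (he' n).1),
    othersPower_last, sum_sub_distrib, sub_nonpos]
  exact he.isMaxOn_normalized hc hh _ (he' _)

theorem sumRate_sub_le (hN : 1 ≤ N) (hc : 0 < c) (hh : ∀ i t, 0 < h i t)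
    (he : IsSequentialBestResponse c h E e) (he' : ∀ i, e' i ∈ budgetSet (E i)) :
    sumRate c h e' - sumRate c h e ≤ ((N : ℝ) - 1) * Fintype.card κ / 2 := by
  obtain ⟨M, rfl⟩ : ∃ M, N = M + 1 := ⟨N - 1, by omega⟩
  rw [sub_eq_sum_hybrid, Fin.sum_univ_castSucc]
  calc _ ≤ ∑ _i : Fin M, (Fintype.card κ : ℝ) / 2 + 0 :=
        add_le_add (sum_le_sum fun i _ => he.sumRate_hybrid_sub_le hc hh he' _)
          (he.sumRate_hybrid_last_sub_nonpos hc hh he')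
    _ = _ := by simp; ring

end IsSequentialBestResponse

end Sequential

theorem stmt_10_general
    (N T : ℕ) (hN : 1 ≤ N)
    (τ N₀ : ℝ) (hτ : 0 < τ) (hN₀ : 0 < N₀)
    (h : Fin N → Fin T → ℝ) (hh : ∀ i t, 0 < h i t)
    (E : Fin N → ℝ)
    (e : Fin N → Fin T → ℝ)
    (hbr : ∀ i : Fin N,
      ((∀ t, 0 ≤ e i t) ∧ ∑ t, e i t = E i) ∧
      ∀ x : Fin T → ℝ, (∀ t, 0 ≤ x t) → (∑ t, x t = E i) →
        ∑ t, Real.log (1 +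
            (h i t * x t + ∑ n ∈ univ.filter (fun n => n < i), h n t * e n t) / (τ * N₀)) ≤
          ∑ t, Real.log (1 +
            (h i t * e i t + ∑ n ∈ univ.filter (fun n => n < i), h n t * e n t) / (τ * N₀))) :
    ∀ e' : Fin N → Fin T → ℝ,
      (∀ i t, 0 ≤ e' i t) → (∀ i, ∑ t, e' i t = E i) →
      ∑ t, Real.log (1 + (1 / (τ * N₀)) * ∑ i, h i t * e' i t) -
          ∑ t, Real.log (1 + (1 / (τ * N₀)) * ∑ i, h i t * e i t) ≤
        ((N : ℝ) - 1) * (T : ℝ) / 2 := by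
  intro e' he' hE'
  have hiwf : IsSequentialBestResponse (τ * N₀) h E e := fun i =>
    ⟨(hbr i).1, isMaxOn_iff.2 fun x hx => (hbr i).2 x hx.1 hx.2⟩
  have := hiwf.sumRate_sub_le hN (mul_pos hτ hN₀) hh fun i => ⟨he' i, hE' i⟩
  rwa [Fintype.card_fin] at this

/-- Quantitative part of Theorem 2: after one pass of sequential water-filling
best responses (each user maximizing against the already-updated users'
signals treated as noise), the sum-throughput in nats is within
`(N-1)·T/2` of the offline optimum. -/
theorem stmt_10
    (N T : ℕ) (hN : 1 ≤ N) (hT : 1 ≤ T)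
    (τ N₀ : ℝ) (hτ : 0 < τ) (hN₀ : 0 < N₀)
    (h : Fin N → Fin T → ℝ) (hh : ∀ i t, 0 < h i t)
    (E : Fin N → ℝ) (hE : ∀ i, 0 < E i)
    (e : Fin N → Fin T → ℝ)
    (hbr : ∀ i : Fin N,
      ((∀ t, 0 ≤ e i t) ∧ ∑ t, e i t = E i) ∧
      ∀ x : Fin T → ℝ, (∀ t, 0 ≤ x t) → (∑ t, x t = E i) →
        ∑ t, Real.log (1 +
            (h i t * x t + ∑ n ∈ univ.filter (fun n => n < i), h n t * e n t) / (τ * N₀)) ≤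
          ∑ t, Real.log (1 +
            (h i t * e i t + ∑ n ∈ univ.filter (fun n => n < i), h n t * e n t) / (τ * N₀))) :
    ∀ e' : Fin N → Fin T → ℝ,
      (∀ i t, 0 ≤ e' i t) → (∀ i, ∑ t, e' i t = E i) →
      ∑ t, Real.log (1 + (1 / (τ * N₀)) * ∑ i, h i t * e' i t) -
          ∑ t, Real.log (1 + (1 / (τ * N₀)) * ∑ i, h i t * e i t) ≤
        ((N : ℝ) - 1) * (T : ℝ) / 2 :=
  stmt_10_general N T hN τ N₀ hτ hN₀ h hh E e hbr
end

section
/- Fix integers N ≥ 1 and T ≥ 1, positive real constants τ, W, N₀, positive channel gains h_t^(i) > 0, and positive energy budgets E_i > 0. Suppose e ∈ F is a simultaneous best response for all users: for every user i, the vector (e_t^(i))_{t=1}^T maximizes x ↦ Σ_{t=1}^T τ·W·log₂(1 + (h_t^(i)·x_t + Σ_{n≠i} h_t^(n)·e_t^(n))/(τ·N₀)) over {x ∈ ℝ^T : x_t ≥ 0, Σ_{t=1}^T x_t = E_i}. Then e is a global maximizer of J over F: J(e) ≥ J(e') for all e' ∈ F. -/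
/-!
Put `c = τ N₀` and `S_t(e) = ∑ᵢ h_t^(i) e_t^(i)`. Up to a positive factor and an additive
constant the throughput is `∑ₜ log (c + S_t(e))`. If user `i` cannot gain by moving along the
segment from `e⁽ⁱ⁾` towards `e'⁽ⁱ⁾`, Fermat's rule at the endpoint of that segment gives
`∑ₜ h_t^(i) (e'_t^(i) - e_t^(i)) / (c + S_t(e)) ≤ 0`. Summed over `i` these give
`∑ₜ (S_t(e') - S_t(e)) / (c + S_t(e)) ≤ 0`, and by the tangent-line bound
`log y - log x ≤ (y - x) / x` this dominates `∑ₜ (log (c + S_t(e')) - log (c + S_t(e)))`.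
-/

open Finset Function Real

lemma Real.log_sub_log_le_div {x y : ℝ} (hx : 0 < x) (hy : 0 < y) :
    log y - log x ≤ (y - x) / x := by
  rw [← log_div hy.ne' hx.ne', sub_div, div_self hx.ne']
  exact log_le_sub_one_of_pos (div_pos hy hx)

section FirstOrder

variable {κ : Type*} [Fintype κ]

lemma hasDerivAt_sum_log_add_mul {u : κ → ℝ} (hu : ∀ t, 0 < u t) (a : κ → ℝ) :
    HasDerivAt (fun θ : ℝ => ∑ t, log (u t + θ * a t)) (∑ t, a t / u t) 0 := by
  refine HasDerivAt.fun_sum fun t _ => ?_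
  have hlin : HasDerivAt (fun θ : ℝ => u t + θ * a t) (a t) 0 := by
    simpa using ((hasDerivAt_id (0 : ℝ)).mul_const (a t)).const_add (u t)
  simpa [div_eq_inv_mul] using hlin.log (by simpa using (hu t).ne')

lemma sum_div_nonpos_of_sum_log_le {u a : κ → ℝ} (hu : ∀ t, 0 < u t)
    (hmax : ∀ θ ∈ Set.Icc (0 : ℝ) 1, ∑ t, log (u t + θ * a t) ≤ ∑ t, log (u t)) :
    ∑ t, a t / u t ≤ 0 := by
  have hloc : IsLocalMaxOn (fun θ : ℝ => ∑ t, log (u t + θ * a t)) (Set.Icc 0 1) 0 :=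
    Filter.eventually_of_mem self_mem_nhdsWithin fun θ hθ => by simpa using hmax θ hθ
  have hcone : (1 : ℝ) ∈ posTangentConeAt (Set.Icc (0 : ℝ) 1) 0 :=
    mem_posTangentConeAt_of_segment_subset (by simp [segment_eq_Icc])
  simpa using hloc.hasFDerivWithinAt_nonpos
    (hasDerivAt_sum_log_add_mul hu a).hasFDerivAt.hasFDerivWithinAt hcone

end FirstOrder

section UnilateralDeviation

variable {ι κ : Type*} [Fintype ι] [DecidableEq ι]

lemma sum_mul_update_eq_add_sum_erase (h f : ι → κ → ℝ) (i : ι) (x : κ → ℝ) (t : κ) :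
    ∑ n, h n t * update f i x n t = h i t * x t + ∑ n ∈ univ.erase i, h n t * f n t := by
  rw [← add_sum_erase univ _ (mem_univ i), update_self]
  congr 1
  exact sum_congr rfl fun n hn => by rw [update_of_ne (ne_of_mem_erase hn)]

variable [Fintype κ]

theorem sum_log_le_of_forall_update {c : ℝ} {h e e' : ι → κ → ℝ}
    (hS : ∀ t, 0 < c + ∑ n, h n t * e n t)
    (hbr : ∀ i, ∀ θ ∈ Set.Icc (0 : ℝ) 1,
      ∑ t, log (c + ∑ n, h n t * update e i (fun t => e i t + θ * (e' i t - e i t)) n t)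
        ≤ ∑ t, log (c + ∑ n, h n t * e n t))
    (hS' : ∀ t, 0 < c + ∑ n, h n t * e' n t) :
    ∑ t, log (c + ∑ n, h n t * e' n t) ≤ ∑ t, log (c + ∑ n, h n t * e n t) := by
  have hfoc (i : ι) : ∑ t, h i t * (e' i t - e i t) / (c + ∑ n, h n t * e n t) ≤ 0 := by
    refine sum_div_nonpos_of_sum_log_le hS fun θ hθ =>
      le_of_eq_of_le (sum_congr rfl fun t _ => ?_) (hbr i θ hθ)
    rw [sum_mul_update_eq_add_sum_erase, ← add_sum_erase univ _ (mem_univ i)]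
    congr 1
    ring
  calc ∑ t, log (c + ∑ n, h n t * e' n t)
      ≤ ∑ t, (log (c + ∑ n, h n t * e n t) +
          (∑ n, h n t * (e' n t - e n t)) / (c + ∑ n, h n t * e n t)) :=
        sum_le_sum fun t _ => by
          have := log_sub_log_le_div (hS t) (hS' t)
          rw [add_sub_add_left_eq_sub] at this
          simp only [mul_sub, sum_sub_distrib]
          linarith
    _ = ∑ t, log (c + ∑ n, h n t * e n t) +
          ∑ n, ∑ t, h n t * (e' n t - e n t) / (c + ∑ n, h n t * e n t) := by
        rw [sum_add_distrib, sum_comm]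
        simp only [sum_div]
    _ ≤ ∑ t, log (c + ∑ n, h n t * e n t) :=
        add_le_of_nonpos_right (sum_nonpos fun i _ => hfoc i)

end UnilateralDeviation

lemma sum_mul_logb_le_iff {κ : Type*} [Fintype κ] {b K c : ℝ} (hb : 1 < b) (hK : 0 < K)
    (hc : 0 < c) {s s' : κ → ℝ} (hs : ∀ t, 0 < c + s t) (hs' : ∀ t, 0 < c + s' t) :
    ∑ t, K * logb b (1 + s t / c) ≤ ∑ t, K * logb b (1 + s' t / c) ↔
      ∑ t, log (c + s t) ≤ ∑ t, log (c + s' t) := by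
  have hrate (r : ℝ) (hr : 0 < c + r) :
      K * logb b (1 + r / c) = K / log b * (log (c + r) - log c) := by
    rw [logb, one_add_div hc.ne', log_div hr.ne' hc.ne']
    ring
  simp only [sum_congr rfl fun t _ => hrate _ (hs t), sum_congr rfl fun t _ => hrate _ (hs' t),
    ← mul_sum, sum_sub_distrib]
  rw [mul_le_mul_iff_of_pos_left (div_pos hK (log_pos hb)), sub_le_sub_iff_right]

theorem stmt_11_general
    (N T : ℕ)
    (τ W N₀ : ℝ) (hτ : 0 < τ) (hW : 0 < W) (hN₀ : 0 < N₀)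
    (h : Fin N → Fin T → ℝ) (hh : ∀ i t, 0 < h i t)
    (E : Fin N → ℝ)
    (e : Fin N → Fin T → ℝ)
    (hpos : ∀ i t, 0 ≤ e i t) (hsum : ∀ i, ∑ t, e i t = E i)
    (hbr : ∀ i : Fin N, ∀ x : Fin T → ℝ, (∀ t, 0 ≤ x t) → (∑ t, x t = E i) →
      ∑ t, τ * W * Real.logb 2 (1 +
          (h i t * x t + ∑ n ∈ univ.erase i, h n t * e n t) / (τ * N₀)) ≤
        ∑ t, τ * W * Real.logb 2 (1 +
          (h i t * e i t + ∑ n ∈ univ.erase i, h n t * e n t) / (τ * N₀))) :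
    ∀ e' : Fin N → Fin T → ℝ,
      (∀ i t, 0 ≤ e' i t) → (∀ i, ∑ t, e' i t = E i) →
      ∑ t, τ * W * Real.logb 2 (1 + (1 / (τ * N₀)) * ∑ i, h i t * e' i t) ≤
        ∑ t, τ * W * Real.logb 2 (1 + (1 / (τ * N₀)) * ∑ i, h i t * e i t) := by
  intro e' hpos' hsum'
  have hc : 0 < τ * N₀ := mul_pos hτ hN₀
  have hrecv (f : Fin N → Fin T → ℝ) (hf : ∀ i t, 0 ≤ f i t) (t : Fin T) :
      0 < τ * N₀ + ∑ n, h n t * f n t :=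
    add_pos_of_pos_of_nonneg hc (sum_nonneg fun n _ => mul_nonneg (hh n t).le (hf n t))
  simp only [one_div_mul_eq_div]
  rw [sum_mul_logb_le_iff one_lt_two (mul_pos hτ hW) hc (hrecv e' hpos') (hrecv e hpos)]
  refine sum_log_le_of_forall_update (hrecv e hpos) (fun i θ ⟨hθ0, hθ1⟩ => ?_)
    (hrecv e' hpos')
  set x : Fin T → ℝ := fun t => e i t + θ * (e' i t - e i t)
  have hx (t : Fin T) : 0 ≤ x t := by
    have : x t = (1 - θ) * e i t + θ * e' i t := by ring
    rw [this]
    exact add_nonneg (mul_nonneg (sub_nonneg.2 hθ1) (hpos i t)) (mul_nonneg hθ0 (hpos' i t))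
  have hxsum : ∑ t, x t = E i := by
    simp only [x, sum_add_distrib, ← mul_sum, sum_sub_distrib, hsum, hsum', sub_self, mul_zero,
      add_zero]
  have hdev : ∑ t, τ * W * logb 2 (1 + (∑ n, h n t * update e i x n t) / (τ * N₀)) ≤
      ∑ t, τ * W * logb 2 (1 + (∑ n, h n t * update e i (e i) n t) / (τ * N₀)) := by
    simpa only [sum_mul_update_eq_add_sum_erase] using hbr i x hx hxsum
  have hupd_nonneg : ∀ n t, 0 ≤ update e i x n t :=
    (forall_update_iff e fun _ y => ∀ t, 0 ≤ y t).2 ⟨hx, fun n _ => hpos n⟩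
  rwa [update_eq_self,
    sum_mul_logb_le_iff one_lt_two (mul_pos hτ hW) hc (hrecv _ hupd_nonneg) (hrecv e hpos)] at hdev

/-- Any fixed point of the per-user water-filling updates (a simultaneous
best response for every user, treating the others' signals as noise) is a
global maximizer of the joint offline sum-throughput. -/
theorem stmt_11
    (N T : ℕ) (hN : 1 ≤ N) (hT : 1 ≤ T)
    (τ W N₀ : ℝ) (hτ : 0 < τ) (hW : 0 < W) (hN₀ : 0 < N₀)
    (h : Fin N → Fin T → ℝ) (hh : ∀ i t, 0 < h i t)
    (E : Fin N → ℝ) (hE : ∀ i, 0 < E i)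
    (e : Fin N → Fin T → ℝ)
    (hpos : ∀ i t, 0 ≤ e i t) (hsum : ∀ i, ∑ t, e i t = E i)
    (hbr : ∀ i : Fin N, ∀ x : Fin T → ℝ, (∀ t, 0 ≤ x t) → (∑ t, x t = E i) →
      ∑ t, τ * W * Real.logb 2 (1 +
          (h i t * x t + ∑ n ∈ univ.erase i, h n t * e n t) / (τ * N₀)) ≤
        ∑ t, τ * W * Real.logb 2 (1 +
          (h i t * e i t + ∑ n ∈ univ.erase i, h n t * e n t) / (τ * N₀))) :
    ∀ e' : Fin N → Fin T → ℝ,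
      (∀ i t, 0 ≤ e' i t) → (∀ i, ∑ t, e' i t = E i) →
      ∑ t, τ * W * Real.logb 2 (1 + (1 / (τ * N₀)) * ∑ i, h i t * e' i t) ≤
        ∑ t, τ * W * Real.logb 2 (1 + (1 / (τ * N₀)) * ∑ i, h i t * e i t) :=
  stmt_11_general N T τ W N₀ hτ hW hN₀ h hh E e hpos hsum hbr
end
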